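/- arXiv:2312.14879 — 5 statements merged into one kernel-verified Lean document; each statement's English description precedes it below -/
import Mathlib

section
/- For every integer n ≥ 3, every strong-separating path system in the complete graph K_n has at least n paths, i.e., ssp(K_n) ≥ n. -/
open SimpleGraph

/-- A strong-separating path system in `G`: a list of paths of `G` such that
for any two distinct edges `e, f` of `G` some path contains `e` but not `f`. -/
def IsStrongSeparatingSystem {V : Type} (G : SimpleGraph V)
    (P : List (Σ u : V, Σ v : V, G.Walk u v)) : Prop :=
  (∀ p ∈ P, p.2.2.IsPath) ∧
  (∀ e ∈ G.edgeSet, ∀ f ∈ G.edgeSet, e ≠ f →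
    ∃ p ∈ P, e ∈ p.2.2.edges ∧ f ∉ p.2.2.edges)

/-- `ssp G` is the minimum size of a strong-separating path system in `G`. -/
noncomputable def ssp {V : Type} (G : SimpleGraph V) : ℕ :=
  sInf { k : ℕ | ∃ P : List (Σ u : V, Σ v : V, G.Walk u v),
    IsStrongSeparatingSystem G P ∧ P.length = k }

/-!
Give each edge `e` the weight `1 / c(e)`, where `c(e)` is the number of paths of the system
through `e`; the total weight is the number of edges, `n (n - 1) / 2`. Every edge lies on some
path (separate it from any other edge), and an edge of a path with at least two edges lies on at
least two paths (separate it from another edge of that path). So a single-edge path carries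
weight at most `1`, and a longer path, having at most `n - 1` edges, at most `(n - 1) / 2`.
Hence `k (n - 1) / 2 ≥ n (n - 1) / 2` for a system of `k` paths. Only the fact that the edge
sets of the paths form a strongly separating family of sets of size at most `n - 1` is used.
-/

open Finset

section SeparatingFamily

variable {α ι : Type*} [DecidableEq α] [Fintype ι] {E : Finset α} {S : ι → Finset α}

def StronglySeparates (E : Finset α) (S : ι → Finset α) : Prop :=
  ∀ a ∈ E, ∀ b ∈ E, a ≠ b → ∃ i, a ∈ S i ∧ b ∉ S i

def coverCount (S : ι → Finset α) (a : α) : ℕ := #{i | a ∈ S i}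

lemma coverCount_pos (hsep : StronglySeparates E S) (hE : 2 ≤ #E) {a : α} (ha : a ∈ E) :
    0 < coverCount S a := by
  obtain ⟨b, hb, hba⟩ := exists_mem_ne hE a
  obtain ⟨i, hai, -⟩ := hsep a ha b hb hba.symm
  exact card_pos.mpr ⟨i, by simpa using hai⟩

lemma two_le_coverCount (hsep : StronglySeparates E S) (hS : ∀ i, S i ⊆ E) {i : ι}
    (hi : 2 ≤ #(S i)) {a : α} (ha : a ∈ S i) : 2 ≤ coverCount S a := by
  obtain ⟨b, hb, hba⟩ := exists_mem_ne hi a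
  obtain ⟨j, haj, hbj⟩ := hsep a (hS i ha) b (hS i hb) hba.symm
  exact one_lt_card.mpr ⟨j, by simpa using haj, i, by simpa using ha, fun h => hbj (h ▸ hb)⟩

lemma sum_sum_inv_coverCount (hS : ∀ i, S i ⊆ E) (hpos : ∀ a ∈ E, 0 < coverCount S a) :
    ∑ i, ∑ a ∈ S i, (coverCount S a : ℚ)⁻¹ = #E := by
  rw [sum_comm' (t' := E) (s' := fun a => {i | a ∈ S i})
    (fun i a => by simpa using fun ha => hS i ha), card_eq_sum_ones, Nat.cast_sum]
  refine sum_congr rfl fun a ha => ?_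
  rw [sum_const, nsmul_eq_mul, ← coverCount, Nat.cast_one,
    mul_inv_cancel₀ (by exact_mod_cast (hpos a ha).ne')]

lemma sum_inv_coverCount_le (hsep : StronglySeparates E S) (hS : ∀ i, S i ⊆ E) (hE : 2 ≤ #E)
    {m : ℕ} (hm : 2 ≤ m) {i : ι} (hi : #(S i) ≤ m) :
    ∑ a ∈ S i, (coverCount S a : ℚ)⁻¹ ≤ m / 2 := by
  have hm' : (2 : ℚ) ≤ m := by exact_mod_cast hm
  rcases le_or_gt #(S i) 1 with hsmall | hlarge
  · calc ∑ a ∈ S i, (coverCount S a : ℚ)⁻¹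
        ≤ ∑ a ∈ S i, (1 : ℚ) := sum_le_sum fun a ha => inv_le_one_of_one_le₀ <| by
          exact_mod_cast coverCount_pos hsep hE (hS i ha)
      _ = #(S i) := by simp
      _ ≤ m / 2 := by
          have : (#(S i) : ℚ) ≤ 1 := by exact_mod_cast hsmall
          linarith
  · calc ∑ a ∈ S i, (coverCount S a : ℚ)⁻¹
        ≤ ∑ a ∈ S i, (2 : ℚ)⁻¹ := sum_le_sum fun a ha => inv_anti₀ two_pos <| by
          exact_mod_cast two_le_coverCount hsep hS hlarge ha
      _ = #(S i) / 2 := by simp [div_eq_mul_inv]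
      _ ≤ m / 2 := by gcongr

theorem StronglySeparates.two_mul_card_le (hsep : StronglySeparates E S) (hS : ∀ i, S i ⊆ E)
    (hE : 2 ≤ #E) {m : ℕ} (hm : 2 ≤ m) (hsize : ∀ i, #(S i) ≤ m) :
    2 * #E ≤ Fintype.card ι * m := by
  have h : (#E : ℚ) ≤ Fintype.card ι * (m / 2) := by
    rw [← sum_sum_inv_coverCount hS fun a ha => coverCount_pos hsep hE ha]
    refine (sum_le_sum fun i _ => sum_inv_coverCount_le hsep hS hE hm (hsize i)).trans_eq ?_
    rw [sum_const, card_univ, nsmul_eq_mul]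
  have h' : ((2 * #E : ℕ) : ℚ) ≤ (Fintype.card ι * m : ℕ) := by push_cast; linarith
  exact_mod_cast h'

end SeparatingFamily

section PathSystem

variable {V : Type} {G : SimpleGraph V}

theorem IsStrongSeparatingSystem.two_mul_card_edgeFinset_le [Fintype V] [DecidableEq V]
    [DecidableRel G.Adj] {P : List (Σ u : V, Σ v : V, G.Walk u v)}
    (hP : IsStrongSeparatingSystem G P) (hV : 3 ≤ Fintype.card V) (hE : 2 ≤ #G.edgeFinset) :
    2 * #G.edgeFinset ≤ P.length * (Fintype.card V - 1) := by
  set S : Fin P.length → Finset (Sym2 V) := fun i => P[i].2.2.edges.toFinset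
  have hsep : StronglySeparates G.edgeFinset S := fun a ha b hb hab => by
    obtain ⟨p, hp, hap, hbp⟩ := hP.2 a (mem_edgeFinset.mp ha) b (mem_edgeFinset.mp hb) hab
    obtain ⟨i, hi, rfl⟩ := List.getElem_of_mem hp
    exact ⟨⟨i, hi⟩, by simpa [S] using hap, by simpa [S] using hbp⟩
  have hS (i) : S i ⊆ G.edgeFinset := fun e he =>
    mem_edgeFinset.mpr (Walk.edges_subset_edgeSet _ (List.mem_toFinset.mp he))
  have hsize (i) : #(S i) ≤ Fintype.card V - 1 := by
    have := (hP.1 _ (List.getElem_mem _) : P[i].2.2.IsPath).length_lt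
    exact (List.toFinset_card_le _).trans (by rw [Walk.length_edges]; omega)
  simpa using hsep.two_mul_card_le hS hE (by omega) hsize

theorem exists_isStrongSeparatingSystem [Fintype V] [DecidableRel G.Adj] :
    ∃ P, IsStrongSeparatingSystem G P := by
  refine ⟨(univ : Finset G.Dart).toList.map fun d => ⟨_, _, d.adj.toWalk⟩, ?_, ?_⟩
  · simp only [List.mem_map, forall_exists_index, and_imp]
    rintro _ d - rfl
    exact d.adj.isPath_toWalk
  · intro e he f _ hef
    induction e with
    | _ a b =>
      rw [mem_edgeSet] at he
      refine ⟨⟨a, b, he.toWalk⟩, List.mem_map.mpr ⟨⟨(a, b), he⟩, by simp, rfl⟩, ?_⟩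
      simpa [Adj.edges_toWalk] using hef.symm

/-- The witness is needed because `sInf ∅ = 0` in `ℕ`. -/
lemma le_ssp {k : ℕ} (hex : ∃ P, IsStrongSeparatingSystem G P)
    (h : ∀ P, IsStrongSeparatingSystem G P → k ≤ P.length) : k ≤ ssp G := by
  obtain ⟨P, hP⟩ := hex
  exact le_csInf ⟨_, P, hP, rfl⟩ fun _ ⟨P, hP, hk⟩ => hk ▸ h P hP

end PathSystem

lemma two_mul_card_edgeFinset_top (V : Type*) [Fintype V] [DecidableEq V] :
    2 * #(⊤ : SimpleGraph V).edgeFinset = Fintype.card V * (Fintype.card V - 1) := by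
  rw [card_edgeFinset_top_eq_card_choose_two, Nat.choose_two_right,
    Nat.mul_div_cancel' (Nat.even_mul_pred_self _).two_dvd]

/-- For `n ≥ 3`, every strong-separating path system in `K_n` has at least `n` paths;
in particular `ssp (K_n) ≥ n`. -/
theorem ssp_completeGraph_lower (n : ℕ) (hn : 3 ≤ n) :
    (∀ P : List (Σ u : Fin n, Σ v : Fin n, (⊤ : SimpleGraph (Fin n)).Walk u v),
      IsStrongSeparatingSystem (⊤ : SimpleGraph (Fin n)) P → n ≤ P.length) ∧
    n ≤ ssp (⊤ : SimpleGraph (Fin n)) := by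
  have hE : 2 * #(⊤ : SimpleGraph (Fin n)).edgeFinset = n * (n - 1) := by
    simpa using two_mul_card_edgeFinset_top (Fin n)
  have hsix : 3 * 2 ≤ n * (n - 1) := Nat.mul_le_mul hn (by omega)
  have hlower (P) (hP : IsStrongSeparatingSystem (⊤ : SimpleGraph (Fin n)) P) : n ≤ P.length := by
    have h := hP.two_mul_card_edgeFinset_le (by simpa using hn) (by omega)
    rw [hE, Fintype.card_fin] at h
    exact Nat.le_of_mul_le_mul_right h (by omega)
  exact ⟨hlower, le_ssp exists_isStrongSeparatingSystem hlower⟩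
end

section
/- For all α, ε ∈ (0,1] there exists n₀ such that the following holds for all n ≥ n₀. If G is an n-vertex graph with exactly α·C(n,2) edges, then ssp(G) ≥ (√(3α+1) − 1 − ε)·n. -/
open SimpleGraph

/-!
Give each edge `e` the set `S(e)` of indices of the paths of a strong-separating system of `k`
paths that contain it. Separation makes `S` injective, and only `1 + k + C(k,2)` subsets of the
`k` indices have fewer than three elements, so `∑ₑ |S(e)| ≥ 3m - 3 - 2k - C(k,2)` for a graph
with `m` edges. Each path has at most `n - 1` edges, so also `∑ₑ |S(e)| ≤ k(n - 1)`. With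
`m = α C(n,2)` these combine to `(k + n + 2)² ≥ (3α + 1) n²`, i.e. `k ≥ (√(3α+1) - 1) n - 2`.
-/

open Finset

section Counting

variable {α β : Type*}

theorem card_filter_card_eq_le_choose [Fintype β] {s : Finset α} {S : α → Finset β}
    (hS : Set.InjOn S s) (j : ℕ) :
    #{a ∈ s | #(S a) = j} ≤ (Fintype.card β).choose j := by
  rw [← card_univ, ← card_powersetCard]
  refine card_le_card_of_injOn S (fun a ha => ?_) (hS.mono (coe_subset.mpr (filter_subset _ _)))
  exact mem_powersetCard.mpr ⟨subset_univ _, (mem_filter.mp ha).2⟩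

theorem three_mul_card_le_sum_add_card_filter (s : Finset α) (c : α → ℕ) :
    3 * #s ≤ ∑ a ∈ s, c a +
      (3 * #{a ∈ s | c a = 0} + 2 * #{a ∈ s | c a = 1} + #{a ∈ s | c a = 2}) := by
  have hind (k j : ℕ) : ∑ a ∈ s, (if c a = j then k else 0) = k * #{a ∈ s | c a = j} := by
    rw [← sum_filter, sum_const, smul_eq_mul, mul_comm]
  calc 3 * #s = ∑ _a ∈ s, 3 := by rw [sum_const, smul_eq_mul, mul_comm]
    _ ≤ ∑ a ∈ s, (c a + ((if c a = 0 then 3 else 0) + (if c a = 1 then 2 else 0)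
          + (if c a = 2 then 1 else 0))) := sum_le_sum fun a _ => by split_ifs <;> omega
    _ = _ := by simp only [sum_add_distrib, hind, one_mul]

theorem three_mul_card_le_sum_card_add_of_injOn [Fintype β] {s : Finset α} {S : α → Finset β}
    (hS : Set.InjOn S s) :
    3 * #s ≤ ∑ a ∈ s, #(S a) + (3 + 2 * Fintype.card β + (Fintype.card β).choose 2) := by
  have h0 := card_filter_card_eq_le_choose hS 0
  have h1 := card_filter_card_eq_le_choose hS 1
  have h2 := card_filter_card_eq_le_choose hS 2
  rw [Nat.choose_zero_right] at h0
  rw [Nat.choose_one_right] at h1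
  have := three_mul_card_le_sum_add_card_filter s (fun a => #(S a))
  omega

end Counting

section PathSystems

variable {V : Type} {G : SimpleGraph V}

def pathsContaining [DecidableEq V] (P : List (Σ u : V, Σ v : V, G.Walk u v)) (e : Sym2 V) :
    Finset (Fin P.length) :=
  {i | e ∈ (P.get i).2.2.edges}

theorem IsStrongSeparatingSystem.injOn_pathsContaining [DecidableEq V]
    {P : List (Σ u : V, Σ v : V, G.Walk u v)} (hP : IsStrongSeparatingSystem G P) :
    Set.InjOn (pathsContaining P) G.edgeSet := by
  intro e he f hf hef
  by_contra hne
  obtain ⟨p, hpP, hep, hfp⟩ := hP.2 e he f hf hne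
  obtain ⟨i, rfl⟩ := List.mem_iff_get.mp hpP
  have hi : i ∈ pathsContaining P f := hef ▸ by simpa [pathsContaining] using hep
  exact hfp (by simpa [pathsContaining] using hi)

theorem sum_card_pathsContaining_le [Fintype V] [DecidableEq V]
    {P : List (Σ u : V, Σ v : V, G.Walk u v)} (hP : ∀ p ∈ P, p.2.2.IsPath)
    (E : Finset (Sym2 V)) :
    ∑ e ∈ E, #(pathsContaining P e) ≤ P.length * (Fintype.card V - 1) := by
  have hpath (i : Fin P.length) : #{e ∈ E | e ∈ (P.get i).2.2.edges} ≤ Fintype.card V - 1 := by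
    have hlt := (hP _ (P.get_mem i)).length_lt
    calc #{e ∈ E | e ∈ (P.get i).2.2.edges} ≤ (P.get i).2.2.edges.toFinset.card :=
          card_le_card fun e he => List.mem_toFinset.mpr (mem_filter.mp he).2
      _ ≤ (P.get i).2.2.edges.length := List.toFinset_card_le _
      _ ≤ Fintype.card V - 1 := by rw [Walk.length_edges]; omega
  calc ∑ e ∈ E, #(pathsContaining P e)
      = ∑ i, #{e ∈ E | e ∈ (P.get i).2.2.edges} :=
        sum_card_bipartiteAbove_eq_sum_card_bipartiteBelow (fun e i => e ∈ (P.get i).2.2.edges)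
    _ ≤ ∑ _i : Fin P.length, (Fintype.card V - 1) := sum_le_sum fun i _ => hpath i
    _ = P.length * (Fintype.card V - 1) := by simp

theorem IsStrongSeparatingSystem.three_mul_ncard_edgeSet_le [Fintype V]
    {P : List (Σ u : V, Σ v : V, G.Walk u v)} (hP : IsStrongSeparatingSystem G P) :
    3 * G.edgeSet.ncard ≤
      P.length * (Fintype.card V - 1) + (3 + 2 * P.length + P.length.choose 2) := by
  classical
  have hinj : Set.InjOn (pathsContaining P) (Set.toFinite G.edgeSet).toFinset := by
    simpa using hP.injOn_pathsContaining
  rw [Set.ncard_eq_toFinset_card _ (Set.toFinite _)]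
  have := three_mul_card_le_sum_card_add_of_injOn hinj
  rw [Fintype.card_fin] at this
  have := sum_card_pathsContaining_le hP.1 (Set.toFinite G.edgeSet).toFinset
  omega

theorem exists_isStrongSeparatingSystem_s3 [Finite V] (G : SimpleGraph V) :
    ∃ P : List (Σ u : V, Σ v : V, G.Walk u v), IsStrongSeparatingSystem G P := by
  have := Fintype.ofFinite V
  classical
  refine ⟨(univ : Finset G.Dart).toList.map fun d => ⟨d.fst, d.snd, d.adj.toWalk⟩, ?_, ?_⟩
  · simp only [List.mem_map, forall_exists_index, and_imp]
    rintro _ d - rfl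
    exact d.adj.isPath_toWalk
  · intro e he f _ hef
    induction e using Sym2.ind with
    | _ u v =>
      rw [mem_edgeSet] at he
      refine ⟨⟨u, v, he.toWalk⟩, ?_, by simp [he.edges_toWalk], ?_⟩
      · exact List.mem_map.mpr ⟨⟨(u, v), he⟩, mem_toList.mpr (mem_univ _), rfl⟩
      · simpa [he.edges_toWalk, eq_comm] using hef

theorem exists_isStrongSeparatingSystem_length_eq_ssp [Finite V] (G : SimpleGraph V) :
    ∃ P : List (Σ u : V, Σ v : V, G.Walk u v), IsStrongSeparatingSystem G P ∧ P.length = ssp G := by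
  obtain ⟨P, hP⟩ := exists_isStrongSeparatingSystem_s3 G
  exact Nat.sInf_mem (s := {k | ∃ P : List (Σ u : V, Σ v : V, G.Walk u v),
    IsStrongSeparatingSystem G P ∧ P.length = k}) ⟨P.length, P, hP, rfl⟩

end PathSystems

theorem sqrt_three_mul_add_one_mul_le {α k n : ℝ} (hα : α ≤ 1) (hn : 2 ≤ n) (hk : 0 ≤ k)
    (h : 3 * (α * (n * (n - 1) / 2)) ≤ k * (n - 1) + (3 + 2 * k + k * (k - 1) / 2)) :
    √(3 * α + 1) * n ≤ k + n + 2 :=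
  calc √(3 * α + 1) * n = √((3 * α + 1) * n ^ 2) := by
        rw [Real.sqrt_mul' _ (sq_nonneg n), Real.sqrt_sq (by linarith)]
    _ ≤ √((k + n + 2) ^ 2) := Real.sqrt_le_sqrt (by nlinarith)
    _ = k + n + 2 := Real.sqrt_sq (by linarith)

/-- Lower bound for graphs with `α C(n,2)` edges:
`ssp(G) ≥ (√(3α+1) − 1 − ε) n`. -/
theorem ssp_lower_bound_general (α ε : ℝ) (hα : α ∈ Set.Ioc (0:ℝ) 1)
    (hε : ε ∈ Set.Ioc (0:ℝ) 1) :
    ∃ n₀ : ℕ, ∀ n ≥ n₀, ∀ G : SimpleGraph (Fin n),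
      (G.edgeSet.ncard : ℝ) = α * (n * (n - 1) / 2) →
      (Real.sqrt (3 * α + 1) - 1 - ε) * n ≤ (ssp G : ℝ) := by
  refine ⟨⌈2 / ε⌉₊ + 2, fun n hn G hm => ?_⟩
  have hn2 : (2 : ℝ) ≤ n := by exact_mod_cast (by omega : 2 ≤ n)
  have hεn : 2 ≤ ε * n := by
    have : 2 / ε ≤ n := (Nat.le_ceil _).trans (by exact_mod_cast (by omega : ⌈2 / ε⌉₊ ≤ n))
    rwa [div_le_iff₀ hε.1, mul_comm] at this
  obtain ⟨P, hP, hlen⟩ := exists_isStrongSeparatingSystem_length_eq_ssp G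
  have hcount := hP.three_mul_ncard_edgeSet_le
  rw [Fintype.card_fin, hlen] at hcount
  have hcountR : 3 * (α * (n * (n - 1) / 2)) ≤
      (ssp G : ℝ) * (n - 1) + (3 + 2 * ssp G + ssp G * (ssp G - 1) / 2) := by
    rw [← hm, ← Nat.cast_choose_two, ← Nat.cast_pred (by omega)]
    exact_mod_cast hcount
  have := sqrt_three_mul_add_one_mul_le hα.2 hn2 (Nat.cast_nonneg _) hcountR
  linarith
end

section
/- Let Δ ≥ 0 and let H be an n-vertex graph with maximum degree at most Δ. Then there exist t ≤ 300·√(Δn) matchings M₁, …, M_t in H such that (M1) every edge of H belongs to exactly two of the matchings, and (M2) for all 1 ≤ i < j ≤ t the matchings Mᵢ and Mⱼ have at most one edge in common. -/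
open SimpleGraph

/-- `M` is a matching in `H`: a set of pairwise non-adjacent edges of `H`. -/
def IsMatchingIn {n : ℕ} (H : SimpleGraph (Fin n)) (M : Finset (Sym2 (Fin n))) : Prop :=
  (↑M : Set (Sym2 (Fin n))) ⊆ H.edgeSet ∧
  ∀ e ∈ M, ∀ f ∈ M, e ≠ f → ∀ v : Fin n, v ∈ e → v ∉ f

/-!
Colour the `m` edges twice, by `a` and by `b`, each with `2D + s + 1` colours, where `D` is the
maximum degree and `s = ⌊√m⌋ + 1`, so that both colourings are proper and `e ↦ (a e, b e)` is
injective. The colour classes of `a` and of `b` are matchings: every edge lies in one class of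
each colouring, classes of the same colouring are disjoint, and an `a`-class meets a `b`-class in
at most one edge. As `D ≤ √(Δn)` and `m ≤ Δn`, there are at most `10 √(Δn)` classes.

Both colourings are greedy. Split the edges into blocks of at most `s` edges labelled by `p < s`.
The colouring `a` must separate edges that touch or have the same label, so each `a`-class has
at most `s` edges; `b` must separate edges that touch or have the same `a`-colour, which makes
`(a, b)` injective. Each of these conflict graphs has degree at most `2D + s` on the edges.
-/

open Finset

theorem SimpleGraph.exists_coloring_on_of_card_adj_le {α : Type*} (G : SimpleGraph α)
    [DecidableRel G.Adj] (s : Finset α) (d : ℕ) (h : ∀ x ∈ s, #{y ∈ s | G.Adj x y} ≤ d) :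
    ∃ c : α → Fin (d + 1), ∀ x ∈ s, ∀ y ∈ s, G.Adj x y → c x ≠ c y := by
  classical
  suffices ∀ t ⊆ s, ∃ c : α → Fin (d + 1),
      ∀ x ∈ t, ∀ y ∈ t, G.Adj x y → c x ≠ c y from
    this s subset_rfl
  intro t
  induction t using Finset.induction_on with
  | empty => exact fun _ => ⟨fun _ => 0, by simp⟩
  | insert x t hxt ih =>
    intro hts
    obtain ⟨c, hc⟩ := ih ((subset_insert x t).trans hts)
    have hcard : #({y ∈ t | G.Adj x y}.image c) < #(univ : Finset (Fin (d + 1))) :=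
      calc #({y ∈ t | G.Adj x y}.image c) ≤ #{y ∈ s | G.Adj x y} :=
            card_image_le.trans <| card_le_card <|
              filter_subset_filter _ ((subset_insert x t).trans hts)
        _ < #(univ : Finset (Fin (d + 1))) := by
            simpa using Nat.lt_succ_of_le (h x (hts (mem_insert_self x t)))
    obtain ⟨k, -, hk⟩ := exists_mem_notMem_of_card_lt_card hcard
    have hkx : ∀ y ∈ t, G.Adj x y → k ≠ c y := fun y hy hxy hky =>
      hk (mem_image.mpr ⟨y, mem_filter.mpr ⟨hy, hxy⟩, hky.symm⟩)
    have hupd : ∀ y ∈ t, Function.update c x k y = c y := fun y hy =>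
      Function.update_of_ne (ne_of_mem_of_not_mem hy hxt) _ _
    refine ⟨Function.update c x k, ?_⟩
    simp +contextual only [forall_mem_insert, Function.update_self, hupd, G.loopless.irrefl,
      IsEmpty.forall_iff, true_and]
    exact ⟨hkx, fun y hy => ⟨fun hyx => (hkx y hy hyx.symm).symm, hc y hy⟩⟩

theorem Finset.exists_fiber_card_le {α : Type*} [DecidableEq α] (E : Finset α) {s t : ℕ}
    (h : #E ≤ s * t) :
    ∃ p : α → ℕ, (∀ x ∈ E, p x < t) ∧ ∀ k, #{x ∈ E | p x = k} ≤ s := by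
  refine ⟨fun x => E.toList.idxOf x / s, fun x hx => ?_, fun k => ?_⟩
  · refine Nat.div_lt_of_lt_mul ?_
    exact (List.idxOf_lt_length_iff.mpr (mem_toList.mpr hx)).trans_le (by simpa using h)
  · rcases Nat.eq_zero_or_pos s with rfl | hs
    · simp_all
    calc #{x ∈ E | E.toList.idxOf x / s = k} ≤ #(Ico (k * s) (k * s + s)) := by
          refine card_le_card_of_injOn (fun x => E.toList.idxOf x) (fun x hx => ?_)
            fun x hx y _ hxy => ?_
          · obtain rfl := (mem_filter.mp hx).2
            exact mem_Ico.mpr ⟨Nat.div_mul_le_self _ _, Nat.lt_div_mul_add hs⟩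
          · exact (List.idxOf_inj (mem_toList.mpr (mem_filter.mp hx).1)).mp hxy
      _ = s := by simp

section

variable {V β : Type*}

def conflictGraph (p : Sym2 V → β) : SimpleGraph (Sym2 V) where
  Adj e f := e ≠ f ∧ ((∃ v, v ∈ e ∧ v ∈ f) ∨ p e = p f)
  symm := ⟨fun _ _ ⟨hne, h⟩ =>
    ⟨hne.symm, h.imp (fun ⟨v, he, hf⟩ => ⟨v, hf, he⟩) Eq.symm⟩⟩

@[simp]
theorem conflictGraph_adj {p : Sym2 V → β} {e f : Sym2 V} :
    (conflictGraph p).Adj e f ↔ e ≠ f ∧ ((∃ v, v ∈ e ∧ v ∈ f) ∨ p e = p f) :=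
  Iff.rfl

open Classical in
theorem card_conflictGraph_adj_le [DecidableEq V] [DecidableEq β] {E : Finset (Sym2 V)} {D : ℕ}
    (hE : ∀ v, #{e ∈ E | v ∈ e} ≤ D) (p : Sym2 V → β) (e : Sym2 V) :
    #{f ∈ E | (conflictGraph p).Adj e f} ≤ 2 * D + #{f ∈ E | p f = p e} := by
  induction e using Sym2.ind with
  | h u w =>
  calc #{f ∈ E | (conflictGraph p).Adj s(u, w) f}
      ≤ #({f ∈ E | u ∈ f} ∪ {f ∈ E | w ∈ f} ∪ {f ∈ E | p f = p s(u, w)}) := by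
        refine card_le_card fun f hf => ?_
        rw [mem_filter, conflictGraph_adj] at hf
        obtain ⟨hfE, -, ⟨v, hv, hvf⟩ | hp⟩ := hf
        · rcases Sym2.mem_iff.mp hv with rfl | rfl <;> simp [hfE, hvf]
        · simp [hfE, hp]
    _ ≤ #{f ∈ E | u ∈ f} + #{f ∈ E | w ∈ f} + #{f ∈ E | p f = p s(u, w)} :=
        (card_union_le _ _).trans (Nat.add_le_add_right (card_union_le _ _) _)
    _ ≤ 2 * D + #{f ∈ E | p f = p s(u, w)} := by linarith [hE u, hE w]

theorem exists_coloring_conflictGraph [DecidableEq V] [DecidableEq β] {E : Finset (Sym2 V)}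
    {D s : ℕ} (hE : ∀ v, #{e ∈ E | v ∈ e} ≤ D) (p : Sym2 V → β)
    (hp : ∀ k, #{f ∈ E | p f = k} ≤ s) :
    ∃ c : Sym2 V → Fin (2 * D + s + 1),
      ∀ e ∈ E, ∀ f ∈ E, (conflictGraph p).Adj e f → c e ≠ c f := by
  classical
  exact (conflictGraph p).exists_coloring_on_of_card_adj_le E _ fun e _ =>
    (card_conflictGraph_adj_le hE p e).trans (Nat.add_le_add_left (hp (p e)) _)

theorem card_colorClass_le {γ : Type*} [DecidableEq γ] {E : Finset (Sym2 V)}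
    {p : Sym2 V → ℕ} {t : ℕ} (hp : ∀ e ∈ E, p e < t) {c : Sym2 V → γ}
    (hc : ∀ e ∈ E, ∀ f ∈ E, (conflictGraph p).Adj e f → c e ≠ c f) (k : γ) :
    #{e ∈ E | c e = k} ≤ t := by
  calc #{e ∈ E | c e = k} ≤ #(range t) := by
        refine card_le_card_of_injOn p (fun e he => ?_) fun e he f hf hpef => ?_
        · exact mem_range.mpr (hp e (mem_filter.mp he).1)
        · rw [coe_filter] at he hf
          by_contra hne
          exact hc e he.1 f hf.1 ⟨hne, Or.inr hpef⟩ (he.2.trans hf.2.symm)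
    _ = t := card_range t

theorem exists_proper_colorings_injOn [DecidableEq V] {E : Finset (Sym2 V)} {D s : ℕ}
    (hE : ∀ v, #{e ∈ E | v ∈ e} ≤ D) (hEs : #E ≤ s * s) :
    ∃ a b : Sym2 V → Fin (2 * D + s + 1),
      (∀ e ∈ E, ∀ f ∈ E, e ≠ f → (∃ v, v ∈ e ∧ v ∈ f) →
        a e ≠ a f ∧ b e ≠ b f) ∧
      Set.InjOn (fun e => (a e, b e)) E := by
  obtain ⟨p, hp_lt, hp_fiber⟩ := E.exists_fiber_card_le hEs
  obtain ⟨a, ha⟩ := exists_coloring_conflictGraph hE p hp_fiber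
  obtain ⟨b, hb⟩ := exists_coloring_conflictGraph hE a (card_colorClass_le hp_lt ha)
  refine ⟨a, b, fun e he f hf hne hshare => ⟨ha e he f hf ⟨hne, .inl hshare⟩,
    hb e he f hf ⟨hne, .inl hshare⟩⟩, fun e he f hf hab => ?_⟩
  by_contra hne
  obtain ⟨haef, hbef⟩ := Prod.ext_iff.mp hab
  exact hb e he f hf ⟨hne, .inr haef⟩ hbef

def colorClasses {K : ℕ} [DecidableEq β] (E : Finset β) (c : β → Fin K) : List (Finset β) :=
  (List.finRange K).map fun i => {e ∈ E | c e = i}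

section colorClasses

variable [DecidableEq β] {K : ℕ} {E : Finset β} {c : β → Fin K}

@[simp]
theorem length_colorClasses : (colorClasses E c).length = K := by
  simp [colorClasses]

theorem length_filter_mem_colorClasses {e : β} (he : e ∈ E) :
    ((colorClasses E c).filter (fun M => e ∈ M)).length = 1 := by
  calc _ = (List.finRange K).count (c e) := by
        rw [List.count, List.countP_eq_length_filter, colorClasses, List.filter_map,
          List.length_map]
        congr 1
        exact List.filter_congr fun i _ => by simp [he, eq_comm, beq_eq_decide]
    _ = 1 := List.count_eq_one_of_mem (List.nodup_finRange K) (List.mem_finRange _)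

theorem pairwise_disjoint_colorClasses : (colorClasses E c).Pairwise Disjoint := by
  refine List.Pairwise.map _ (fun i j hij => ?_) (List.nodup_finRange K)
  exact disjoint_filter.mpr fun e _ hi hj => hij (hi.symm.trans hj)

theorem pairwise_card_inter_le_one_colorClasses :
    (colorClasses E c).Pairwise fun M M' => #(M ∩ M') ≤ 1 :=
  pairwise_disjoint_colorClasses.imp fun h => by simp [disjoint_iff_inter_eq_empty.mp h]

theorem card_inter_le_one_of_mem_colorClasses {c' : β → Fin K}
    (hinj : Set.InjOn (fun e => (c e, c' e)) E) {M M' : Finset β}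
    (hM : M ∈ colorClasses E c) (hM' : M' ∈ colorClasses E c') : #(M ∩ M') ≤ 1 := by
  simp only [colorClasses, List.mem_map, List.mem_finRange, true_and] at hM hM'
  obtain ⟨i, rfl⟩ := hM
  obtain ⟨j, rfl⟩ := hM'
  refine card_le_one.mpr fun e he f hf => ?_
  simp only [mem_inter, mem_filter] at he hf
  exact hinj he.1.1 hf.1.1 (Prod.ext (he.1.2.trans hf.1.2.symm) (he.2.2.trans hf.2.2.symm))

end colorClasses

theorem isMatchingIn_of_mem_colorClasses {n K : ℕ} {H : SimpleGraph (Fin n)}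
    {E : Finset (Sym2 (Fin n))} (hE : ↑E ⊆ H.edgeSet) {c : Sym2 (Fin n) → Fin K}
    (hc : ∀ e ∈ E, ∀ f ∈ E, e ≠ f → (∃ v, v ∈ e ∧ v ∈ f) → c e ≠ c f)
    {M : Finset (Sym2 (Fin n))} (hM : M ∈ colorClasses E c) : IsMatchingIn H M := by
  simp only [colorClasses, List.mem_map, List.mem_finRange, true_and] at hM
  obtain ⟨i, rfl⟩ := hM
  refine ⟨fun e he => hE (mem_filter.mp he).1, fun e he f hf hne v hve hvf => ?_⟩
  rw [mem_filter] at he hf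
  exact hc e he.1 f hf.1 hne ⟨v, hve, hvf⟩ (he.2.trans hf.2.symm)

end

namespace SimpleGraph

variable {V : Type*} [Fintype V] (H : SimpleGraph V) [DecidableRel H.Adj] {Δ : ℝ}

theorem ncard_neighborSet_eq_degree (v : V) : (H.neighborSet v).ncard = H.degree v := by
  rw [Set.ncard_eq_toFinset_card', ← neighborFinset_def, card_neighborFinset_eq_degree]

theorem two_mul_card_edgeFinset_le (hdeg : ∀ v, (H.degree v : ℝ) ≤ Δ) :
    2 * (#H.edgeFinset : ℝ) ≤ Δ * Fintype.card V :=
  calc 2 * (#H.edgeFinset : ℝ) = ∑ v, (H.degree v : ℝ) := by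
        exact_mod_cast H.sum_degrees_eq_twice_card_edges.symm
    _ ≤ ∑ _v : V, Δ := sum_le_sum fun v _ => hdeg v
    _ = Δ * Fintype.card V := by simp [mul_comm]

theorem maxDegree_le_sqrt_mul_card (hdeg : ∀ v, (H.degree v : ℝ) ≤ Δ) :
    (H.maxDegree : ℝ) ≤ √(Δ * Fintype.card V) := by
  cases isEmpty_or_nonempty V
  · simp [maxDegree_of_subsingleton]
  obtain ⟨v, hv⟩ := H.exists_maximal_degree_vertex
  have hΔ : (H.maxDegree : ℝ) ≤ Δ := hv ▸ hdeg v
  have hcard : (H.maxDegree : ℝ) ≤ Fintype.card V := by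
    exact_mod_cast H.maxDegree_lt_card_verts.le
  calc (H.maxDegree : ℝ) = |(H.maxDegree : ℝ)| := (abs_of_nonneg (Nat.cast_nonneg _)).symm
    _ ≤ √(Δ * Fintype.card V) := Real.abs_le_sqrt <| by
        rw [sq]; exact mul_le_mul hΔ hcard (Nat.cast_nonneg _) ((Nat.cast_nonneg _).trans hΔ)

theorem two_mul_numColors_le (hdeg : ∀ v, (H.degree v : ℝ) ≤ Δ)
    (hE : H.edgeFinset.Nonempty) :
    (2 * (2 * H.maxDegree + (Nat.sqrt #H.edgeFinset + 1) + 1) : ℝ) ≤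
      300 * √(Δ * Fintype.card V) := by
  have hm := H.two_mul_card_edgeFinset_le hdeg
  have hm1 : (1 : ℝ) ≤ #H.edgeFinset := by exact_mod_cast hE.card_pos
  have hsqrt : (Nat.sqrt #H.edgeFinset : ℝ) ≤ √(Δ * Fintype.card V) :=
    Real.nat_sqrt_le_real_sqrt.trans (Real.sqrt_le_sqrt (by linarith))
  have hone : 1 ≤ √(Δ * Fintype.card V) := Real.one_le_sqrt.mpr (by linarith)
  linarith [H.maxDegree_le_sqrt_mul_card hdeg]

end SimpleGraph

theorem separating_matchings_general (n : ℕ) (Δ : ℝ) (H : SimpleGraph (Fin n))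
    (hdeg : ∀ v : Fin n, ((H.neighborSet v).ncard : ℝ) ≤ Δ) :
    ∃ Ms : List (Finset (Sym2 (Fin n))),
      ((Ms.length : ℝ) ≤ 300 * Real.sqrt (Δ * n)) ∧
      (∀ M ∈ Ms, IsMatchingIn H M) ∧
      -- (M1) each edge of H lies in exactly two of the matchings
      (∀ e ∈ H.edgeSet, (Ms.filter (fun M => e ∈ M)).length = 2) ∧
      -- (M2) any two of the matchings share at most one edge
      Ms.Pairwise (fun M M' => (M ∩ M').card ≤ 1) := by
  classical
  rcases H.edgeFinset.eq_empty_or_nonempty with hE | hE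
  · refine ⟨[], by simp only [List.length_nil, Nat.cast_zero]; positivity, by simp,
      fun e he => ?_, by simp⟩
    simp [← mem_edgeFinset, hE] at he
  have hdeg' (v : Fin n) : (H.degree v : ℝ) ≤ Δ := H.ncard_neighborSet_eq_degree v ▸ hdeg v
  obtain ⟨a, b, hab, hinj⟩ := exists_proper_colorings_injOn (E := H.edgeFinset)
    (fun v => by simpa [← incidenceFinset_eq_filter] using H.degree_le_maxDegree v)
    (Nat.lt_succ_sqrt #H.edgeFinset).le
  refine ⟨colorClasses H.edgeFinset a ++ colorClasses H.edgeFinset b, ?_, ?_, ?_, ?_⟩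
  · simpa [two_mul] using H.two_mul_numColors_le hdeg' hE
  · intro M hM
    rcases List.mem_append.mp hM with hM | hM
    · exact isMatchingIn_of_mem_colorClasses (by simp)
        (fun e he f hf hne h => (hab e he f hf hne h).1) hM
    · exact isMatchingIn_of_mem_colorClasses (by simp)
        (fun e he f hf hne h => (hab e he f hf hne h).2) hM
  · intro e he
    have he' := mem_edgeFinset.mpr he
    rw [List.filter_append, List.length_append, length_filter_mem_colorClasses he',
      length_filter_mem_colorClasses he']
  · exact List.pairwise_append.mpr ⟨pairwise_card_inter_le_one_colorClasses,
      pairwise_card_inter_le_one_colorClasses,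
      fun M hM M' hM' => card_inter_le_one_of_mem_colorClasses hinj hM hM'⟩

/-- Any `n`-vertex graph `H` with `Δ(H) ≤ Δ` admits at most `300 √(Δn)` matchings
such that every edge of `H` lies in exactly two of them and any two of them share
at most one edge. -/
theorem separating_matchings (n : ℕ) (Δ : ℝ) (hΔ : 0 ≤ Δ) (H : SimpleGraph (Fin n))
    (hdeg : ∀ v : Fin n, ((H.neighborSet v).ncard : ℝ) ≤ Δ) :
    ∃ Ms : List (Finset (Sym2 (Fin n))),
      ((Ms.length : ℝ) ≤ 300 * Real.sqrt (Δ * n)) ∧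
      (∀ M ∈ Ms, IsMatchingIn H M) ∧
      -- (M1) each edge of H lies in exactly two of the matchings
      (∀ e ∈ H.edgeSet, (Ms.filter (fun M => e ∈ M)).length = 2) ∧
      -- (M2) any two of the matchings share at most one edge
      Ms.Pairwise (fun M M' => (M ∩ M').card ≤ 1) :=
  separating_matchings_general n Δ H hdeg
end

section
/- Let H be an n-vertex graph with maximum degree at most Δ, and set D = 256·√(Δn). Then there exists an injective function φ from the edge set E(H) to the set of 2-element subsets of {1, 2, …, D+1} such that for every vertex v of H, the sets φ(vw) over all neighbours w of v are pairwise disjoint. -/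
open SimpleGraph Finset

private lemma pair_filter_card (m ℓ : ℕ) :
    ({p ∈ (Finset.Icc 1 m).powersetCard 2 | ℓ ∈ p}).card ≤ m := by
  have hsub : {p ∈ (Finset.Icc 1 m).powersetCard 2 | ℓ ∈ p} ⊆
      (Finset.Icc 1 m).image (fun x => insert ℓ {x}) := by
    intro p hp
    simp only [Finset.mem_filter, Finset.mem_powersetCard] at hp
    obtain ⟨⟨hsub, hcard⟩, hℓ⟩ := hp
    obtain ⟨a, b, hab, rfl⟩ := Finset.card_eq_two.mp hcard
    simp only [Finset.mem_insert, Finset.mem_singleton] at hℓ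
    rcases hℓ with rfl | rfl
    · exact Finset.mem_image.mpr ⟨b, hsub (by simp), rfl⟩
    · refine Finset.mem_image.mpr ⟨a, hsub (by simp), ?_⟩
      rw [Finset.pair_comm]
  calc ({p ∈ (Finset.Icc 1 m).powersetCard 2 | ℓ ∈ p}).card
      ≤ ((Finset.Icc 1 m).image (fun x => insert ℓ {x})).card := Finset.card_le_card hsub
    _ ≤ (Finset.Icc 1 m).card := Finset.card_image_le
    _ = m := by simp

private lemma greedy (n m d : ℕ) (H : SimpleGraph (Fin n)) [DecidableRel H.Adj]
    (hd : ∀ v, H.degree v ≤ d)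
    (hcount : H.edgeFinset.card + 4 * d * m ≤ m.choose 2)
    (S : Finset (Sym2 (Fin n))) :
    S ⊆ H.edgeFinset →
    ∃ φ : Sym2 (Fin n) → Finset ℕ,
      Set.InjOn φ ↑S ∧
      (∀ e ∈ S, φ e ∈ (Finset.Icc 1 m).powersetCard 2) ∧
      (∀ e ∈ S, ∀ e' ∈ S, e ≠ e' → (∃ x, x ∈ e ∧ x ∈ e') → Disjoint (φ e) (φ e')) := by
  classical
  induction S using Finset.induction_on with
  | empty => exact fun _ => ⟨fun _ => ∅, by simp, by simp, by simp⟩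
  | @insert a S ha ih =>
    intro hsub
    obtain ⟨φ, hinj, hmem, hdisj⟩ := ih ((Finset.subset_insert a S).trans hsub)
    obtain ⟨⟨u, v⟩, rfl⟩ := a.exists_rep
    have haE : s(u, v) ∈ H.edgeFinset := hsub (Finset.mem_insert_self _ _)
    have hAdj : H.Adj u v := (SimpleGraph.mem_edgeFinset.mp haE)
    set C : Finset (Finset ℕ) := (Finset.Icc 1 m).powersetCard 2 with hC
    set T : Finset (Sym2 (Fin n)) := {e' ∈ S | u ∈ e' ∨ v ∈ e'} with hT
    set L : Finset ℕ := T.biUnion φ with hL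
    set used : Finset (Finset ℕ) := S.image φ with hused
    set bad : Finset (Finset ℕ) := {p ∈ C | ¬ Disjoint p L} with hbad
    -- cardinality bounds
    have hTcard : T.card ≤ 2 * d := by
      have hsub2 : T ⊆ H.incidenceFinset u ∪ H.incidenceFinset v := by
        intro e' he'
        simp only [hT, Finset.mem_filter] at he'
        obtain ⟨heS, hx⟩ := he'
        have heE : e' ∈ H.edgeSet := SimpleGraph.mem_edgeFinset.mp
          (((Finset.subset_insert _ S).trans hsub) heS)
        rcases hx with hx | hx
        · refine Finset.mem_union_left _ ?_
          rw [SimpleGraph.mem_incidenceFinset]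
          exact ⟨heE, hx⟩
        · refine Finset.mem_union_right _ ?_
          rw [SimpleGraph.mem_incidenceFinset]
          exact ⟨heE, hx⟩
      calc T.card ≤ (H.incidenceFinset u ∪ H.incidenceFinset v).card :=
            Finset.card_le_card hsub2
        _ ≤ (H.incidenceFinset u).card + (H.incidenceFinset v).card :=
            Finset.card_union_le _ _
        _ ≤ d + d := by
            rw [H.card_incidenceFinset_eq_degree, H.card_incidenceFinset_eq_degree]
            exact Nat.add_le_add (hd u) (hd v)
        _ = 2 * d := by ring
    have hLcard : L.card ≤ 4 * d := by
      calc L.card ≤ ∑ e' ∈ T, (φ e').card := Finset.card_biUnion_le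
        _ ≤ ∑ _e' ∈ T, 2 := by
            refine Finset.sum_le_sum fun e' he' => ?_
            have heS : e' ∈ S := (Finset.mem_filter.mp he').1
            have := hmem e' heS
            rw [Finset.mem_powersetCard] at this
            exact le_of_eq this.2
        _ = T.card * 2 := by rw [Finset.sum_const, smul_eq_mul]
        _ ≤ 2 * d * 2 := Nat.mul_le_mul_right _ hTcard
        _ = 4 * d := by ring
    have hbadcard : bad.card ≤ 4 * d * m := by
      have hsub3 : bad ⊆ L.biUnion (fun ℓ => {p ∈ C | ℓ ∈ p}) := by
        intro p hp
        simp only [hbad, Finset.mem_filter] at hp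
        obtain ⟨hpC, hnd⟩ := hp
        obtain ⟨ℓ, hℓp, hℓL⟩ := Finset.not_disjoint_iff.mp hnd
        exact Finset.mem_biUnion.mpr ⟨ℓ, hℓL, Finset.mem_filter.mpr ⟨hpC, hℓp⟩⟩
      calc bad.card ≤ (L.biUnion (fun ℓ => {p ∈ C | ℓ ∈ p})).card :=
            Finset.card_le_card hsub3
        _ ≤ ∑ ℓ ∈ L, ({p ∈ C | ℓ ∈ p}).card := Finset.card_biUnion_le
        _ ≤ ∑ _ℓ ∈ L, m := Finset.sum_le_sum fun ℓ _ => pair_filter_card m ℓ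
        _ = L.card * m := by rw [Finset.sum_const, smul_eq_mul]
        _ ≤ 4 * d * m := Nat.mul_le_mul_right _ hLcard
    have hScard : S.card < H.edgeFinset.card := by
      have := Finset.card_le_card hsub
      rwa [Finset.card_insert_of_notMem ha] at this
    have hCcard : C.card = m.choose 2 := by
      rw [hC, Finset.card_powersetCard, Nat.card_Icc, Nat.add_sub_cancel]
    -- find a fresh pair
    obtain ⟨p, hpC, hpnot⟩ : ∃ p ∈ C, p ∉ used ∪ bad := by
      by_contra h
      push_neg at h
      have hsub4 : C ⊆ used ∪ bad := h
      have h1 : C.card ≤ (used ∪ bad).card := Finset.card_le_card hsub4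
      have h2 : (used ∪ bad).card ≤ used.card + bad.card := Finset.card_union_le _ _
      have h3 : used.card ≤ S.card := Finset.card_image_le
      omega
    have hpused : p ∉ used := fun h => hpnot (Finset.mem_union_left _ h)
    have hpdisjL : Disjoint p L := by
      by_contra h
      exact hpnot (Finset.mem_union_right _ (Finset.mem_filter.mpr ⟨hpC, h⟩))
    refine ⟨Function.update φ s(u, v) p, ?_, ?_, ?_⟩
    · -- injectivity
      intro x hx y hy hxy
      simp only [Finset.coe_insert, Set.mem_insert_iff, Finset.mem_coe] at hx hy
      rcases hx with rfl | hx <;> rcases hy with rfl | hy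
      · rfl
      · exfalso
        rw [Function.update_self, Function.update_of_ne (ne_of_mem_of_not_mem hy ha)] at hxy
        exact hpused (hused ▸ Finset.mem_image.mpr ⟨y, hy, hxy.symm⟩)
      · exfalso
        rw [Function.update_self, Function.update_of_ne (ne_of_mem_of_not_mem hx ha)] at hxy
        exact hpused (hused ▸ Finset.mem_image.mpr ⟨x, hx, hxy⟩)
      · rw [Function.update_of_ne (ne_of_mem_of_not_mem hx ha),
          Function.update_of_ne (ne_of_mem_of_not_mem hy ha)] at hxy
        exact hinj hx hy hxy
    · -- membership
      intro e he
      rcases Finset.mem_insert.mp he with rfl | he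
      · rwa [Function.update_self]
      · rw [Function.update_of_ne (ne_of_mem_of_not_mem he ha)]
        exact hmem e he
    · -- disjointness of adjacent edges
      intro e he e' he' hne hshare
      have key : ∀ e'' ∈ S, (∃ x, x ∈ s(u,v) ∧ x ∈ e'') → Disjoint p (φ e'') := by
        intro e'' he'' ⟨x, hx1, hx2⟩
        have he''T : e'' ∈ T := by
          rw [hT, Finset.mem_filter]
          rcases Sym2.mem_iff.mp hx1 with rfl | rfl
          · exact ⟨he'', Or.inl hx2⟩
          · exact ⟨he'', Or.inr hx2⟩
        exact hpdisjL.mono_right (hL ▸ Finset.subset_biUnion_of_mem φ he''T)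
      rcases Finset.mem_insert.mp he with rfl | he <;>
        rcases Finset.mem_insert.mp he' with rfl | he'
      · exact absurd rfl hne
      · rw [Function.update_self, Function.update_of_ne (ne_of_mem_of_not_mem he' ha)]
        exact key e' he' hshare
      · rw [Function.update_self, Function.update_of_ne (ne_of_mem_of_not_mem he ha)]
        exact (key e he (hshare.imp fun x ⟨h1, h2⟩ => ⟨h2, h1⟩)).symm
      · rw [Function.update_of_ne (ne_of_mem_of_not_mem he ha),
          Function.update_of_ne (ne_of_mem_of_not_mem he' ha)]
        exact hdisj e he e' he' hne hshare

/-- For an `n`-vertex graph `H` with `Δ(H) ≤ Δ` and `D = 256 √(Δn)`, there is an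
injective assignment `φ` of 2-element subsets of `{1, …, D+1}` to the edges of `H`
such that the label pairs of edges sharing a vertex are pairwise disjoint. -/
theorem edge_two_labelling (n : ℕ) (Δ : ℝ) (H : SimpleGraph (Fin n))
    (hdeg : ∀ v : Fin n, ((H.neighborSet v).ncard : ℝ) ≤ Δ)
    (D : ℝ) (hD : D = 256 * Real.sqrt (Δ * n)) :
    ∃ φ : Sym2 (Fin n) → Finset ℕ,
      Set.InjOn φ H.edgeSet ∧
      (∀ e ∈ H.edgeSet, (φ e).card = 2 ∧ ∀ k ∈ φ e, 1 ≤ k ∧ (k : ℝ) ≤ D + 1) ∧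
      (∀ v w w' : Fin n, H.Adj v w → H.Adj v w' → w ≠ w' →
        Disjoint (φ s(v, w)) (φ s(v, w'))) := by
  classical
  haveI : DecidableRel H.Adj := Classical.decRel _
  have hD0 : 0 ≤ D := by
    rw [hD]; positivity
  set d : ℕ := Finset.univ.sup (fun v => H.degree v) with hd_def
  have hd : ∀ v, H.degree v ≤ d := fun v => Finset.le_sup (f := fun v => H.degree v) (Finset.mem_univ v)
  set m : ℕ := ⌊D⌋₊ + 1 with hm_def
  have hmD : (m : ℝ) ≤ D + 1 := by
    rw [hm_def]
    push_cast
    have := Nat.floor_le hD0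
    linarith
  have hDm : D ≤ m := by
    rw [hm_def]
    push_cast
    exact (Nat.lt_floor_add_one D).le
  have hncard : ∀ v, (H.neighborSet v).ncard = H.degree v := by
    intro v
    rw [Set.ncard_eq_toFinset_card']
    rfl
  have hcount : H.edgeFinset.card + 4 * d * m ≤ m.choose 2 := by
    by_cases hE : H.edgeFinset = ∅
    · have hH : H = ⊥ := by
        rw [← SimpleGraph.edgeSet_eq_empty, ← SimpleGraph.coe_edgeFinset, hE]
        simp
      have hd0 : d = 0 := by
        rw [hd_def]
        refine Nat.le_zero.mp (Finset.sup_le fun v _ => Nat.le_zero.mpr ?_)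
        rw [← SimpleGraph.card_neighborFinset_eq_degree, Finset.card_eq_zero]
        refine Finset.eq_empty_of_forall_notMem fun w hw => ?_
        have hadj : H.Adj v w := (H.mem_neighborFinset v w).mp hw
        have : s(v, w) ∈ H.edgeFinset := SimpleGraph.mem_edgeFinset.mpr hadj
        rw [hE] at this
        exact absurd this (Finset.notMem_empty _)
      rw [hE, hd0]
      simp
    · obtain ⟨e, he⟩ := Finset.nonempty_iff_ne_empty.mpr hE
      obtain ⟨⟨u, v⟩, rfl⟩ := e.exists_rep
      have hAdj : H.Adj u v := SimpleGraph.mem_edgeFinset.mp he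
      have hΔ0 : (0 : ℝ) ≤ Δ := le_trans (by positivity) (hdeg u)
      have hd1 : 1 ≤ d := by
        refine le_trans ?_ (hd u)
        rw [← SimpleGraph.card_neighborFinset_eq_degree]
        exact Finset.card_pos.mpr ⟨v, (H.mem_neighborFinset u v).mpr hAdj⟩
      -- real bounds
      have hdΔ : (d : ℝ) ≤ Δ := by
        obtain ⟨v₁, _, hv₁⟩ := Finset.exists_mem_eq_sup Finset.univ
          ⟨u, Finset.mem_univ u⟩ (fun v => H.degree v)
        rw [hd_def, hv₁, ← hncard v₁]
        exact hdeg v₁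
      have hdn : (d : ℕ) ≤ n := by
        obtain ⟨v₁, _, hv₁⟩ := Finset.exists_mem_eq_sup Finset.univ
          ⟨u, Finset.mem_univ u⟩ (fun v => H.degree v)
        rw [hd_def, hv₁, ← SimpleGraph.card_neighborFinset_eq_degree]
        calc (H.neighborFinset v₁).card ≤ Finset.univ.card := Finset.card_le_univ _
          _ = n := by simp
      have hdsqrt : (d : ℝ) ≤ Real.sqrt (Δ * n) := by
        have h1 : (d : ℝ) * d ≤ Δ * n := by
          have : (d : ℝ) ≤ n := by exact_mod_cast hdn
          nlinarith [Nat.cast_nonneg (α := ℝ) d]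
        calc (d : ℝ) = Real.sqrt ((d : ℝ) * d) := (Real.sqrt_mul_self (by positivity)).symm
          _ ≤ Real.sqrt (Δ * n) := Real.sqrt_le_sqrt h1
      have hdm : (d : ℝ) ≤ (m : ℝ) / 256 := by
        have : Real.sqrt (Δ * n) = D / 256 := by rw [hD]; ring
        rw [this] at hdsqrt
        linarith
      have hnΔ : (n : ℝ) * Δ ≤ ((m : ℝ) / 256) ^ 2 := by
        have h1 : Real.sqrt (Δ * n) ≤ (m : ℝ) / 256 := by
          have : Real.sqrt (Δ * n) = D / 256 := by rw [hD]; ring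
          rw [this]; linarith
        have h2 : Δ * n = Real.sqrt (Δ * n) ^ 2 := (Real.sq_sqrt (by positivity)).symm
        calc (n : ℝ) * Δ = Δ * n := by ring
          _ = Real.sqrt (Δ * n) ^ 2 := h2
          _ ≤ ((m : ℝ) / 256) ^ 2 := by
              have := Real.sqrt_nonneg (Δ * n)
              nlinarith
      have hm257 : (257 : ℝ) ≤ m := by
        have hsq : (1 : ℝ) ≤ Real.sqrt (Δ * n) := by
          calc (1 : ℝ) ≤ d := by exact_mod_cast hd1
            _ ≤ Real.sqrt (Δ * n) := hdsqrt
        have hD256 : (256 : ℝ) ≤ D := by rw [hD]; linarith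
        have h1 : (256 : ℕ) ≤ ⌊D⌋₊ := Nat.le_floor (by exact_mod_cast hD256)
        have h2 : (257 : ℕ) ≤ m := by omega
        exact_mod_cast h2
      -- edge count bound
      have hEd : 2 * H.edgeFinset.card ≤ n * d := by
        rw [← H.sum_degrees_eq_twice_card_edges]
        calc ∑ v, H.degree v ≤ Finset.univ.card * d :=
              Finset.sum_le_card_nsmul Finset.univ _ d fun v _ => hd v
          _ = n * d := by simp
      have hEdR : 2 * (H.edgeFinset.card : ℝ) ≤ ((m : ℝ) / 256) ^ 2 := by
        have h1 : (2 * H.edgeFinset.card : ℝ) ≤ (n : ℝ) * d := by exact_mod_cast hEd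
        have h2 : (n : ℝ) * d ≤ (n : ℝ) * Δ := by
          have : (0 : ℝ) ≤ n := Nat.cast_nonneg n
          nlinarith
        linarith
      -- conclude
      rw [Nat.choose_two_right]
      rw [Nat.le_div_iff_mul_le (by norm_num)]
      have hfin : ((H.edgeFinset.card + 4 * d * m) * 2 : ℝ) ≤ (m : ℝ) * (m - 1) := by
        have hm0 : (0 : ℝ) ≤ m := Nat.cast_nonneg m
        nlinarith [mul_le_mul_of_nonneg_right hdm hm0]
      have : ((H.edgeFinset.card + 4 * d * m) * 2 : ℝ) ≤ ((m * (m - 1) : ℕ) : ℝ) := by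
        have hm1 : 1 ≤ m := Nat.le_add_left 1 _
        push_cast [Nat.cast_sub hm1]
        push_cast at hfin
        linarith
      exact_mod_cast this
  obtain ⟨φ, hinj, hmem, hdisj⟩ := greedy n m d H hd hcount H.edgeFinset (subset_refl _)
  refine ⟨φ, ?_, ?_, ?_⟩
  · rwa [SimpleGraph.coe_edgeFinset] at hinj
  · intro e he
    have heF : e ∈ H.edgeFinset := SimpleGraph.mem_edgeFinset.mpr he
    have := hmem e heF
    rw [Finset.mem_powersetCard] at this
    refine ⟨this.2, fun k hk => ?_⟩
    have := this.1 hk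
    rw [Finset.mem_Icc] at this
    refine ⟨this.1, ?_⟩
    calc (k : ℝ) ≤ m := by exact_mod_cast this.2
      _ ≤ D + 1 := hmD
  · intro v w w' hvw hvw' hww'
    have h1 : s(v, w) ∈ H.edgeFinset := SimpleGraph.mem_edgeFinset.mpr hvw
    have h2 : s(v, w') ∈ H.edgeFinset := SimpleGraph.mem_edgeFinset.mpr hvw'
    have hne : s(v, w) ≠ s(v, w') := by
      intro h
      rw [Sym2.eq_iff] at h
      rcases h with ⟨-, rfl⟩ | ⟨rfl, rfl⟩
      · exact hww' rfl
      · exact hww' rfl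
    exact hdisj _ h1 _ h2 hne ⟨v, Sym2.mem_mk_left v w, Sym2.mem_mk_left v w'⟩
end

section
/- For each ν, τ > 0 with ν ≤ τ there exists n₀ such that the following holds for each n ≥ n₀. If G is an n-vertex robust (ν, τ)-expander with minimum degree at least (τ + ν)n, then G is (δ, L)-robustly-connected with L = ⌈1/ν⌉ and δ = (ν/4)^L · 4^{−L²}. -/
open SimpleGraph

/-- An `n`-vertex graph `G` is `(δ, L)`-robustly-connected if for every pair of distinct
vertices `x, y` there is `1 ≤ ℓ ≤ L` such that there are at least `δ n^ℓ` `(x,y)`-paths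
with exactly `ℓ` inner vertices each. -/
def RobustlyConnected (n : ℕ) (G : SimpleGraph (Fin n)) (δ : ℝ) (L : ℕ) : Prop :=
  ∀ x y : Fin n, x ≠ y → ∃ ℓ : ℕ, 1 ≤ ℓ ∧ ℓ ≤ L ∧
    δ * (n : ℝ) ^ ℓ ≤
      (({w : G.Walk x y | w.IsPath ∧ w.length = ℓ + 1} : Set (G.Walk x y)).ncard : ℝ)

/-- The `ν`-robust neighbourhood of `S` in `G`: all vertices with at least `νn`
neighbours in `S`. -/
def RobustNbhd (n : ℕ) (G : SimpleGraph (Fin n)) (ν : ℝ) (S : Set (Fin n)) :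
    Set (Fin n) :=
  {v : Fin n | ν * n ≤ ((G.neighborSet v ∩ S).ncard : ℝ)}

/-- `G` is a robust `(ν, τ)`-expander. -/
def RobustExpander (n : ℕ) (G : SimpleGraph (Fin n)) (ν τ : ℝ) : Prop :=
  ∀ S : Set (Fin n), τ * n ≤ (S.ncard : ℝ) → (S.ncard : ℝ) ≤ (1 - τ) * n →
    (S.ncard : ℝ) + ν * n ≤ ((RobustNbhd n G ν S).ncard : ℝ)

open scoped Classical

namespace RobustAux

variable {V : Type*} [Fintype V] [DecidableEq V]

/-- Finset of walks `z → x` with `ℓ+1` edges, inner vertices tracked by `T`,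
avoiding `F`. -/
noncomputable def PF (G : SimpleGraph V) (x : V) (T : ℕ → Finset V) :
    (ℓ : ℕ) → (F : Finset V) → (z : V) → Finset (G.Walk z x)
  | 0, _, z => if h : G.Adj z x then {Walk.cons h Walk.nil} else ∅
  | (ℓ+1), F, z =>
      ((G.neighborFinset z ∩ T ℓ) \ insert z F).attach.biUnion
        (fun u => (PF G x T ℓ (insert z F) u.1).image
          (fun w => Walk.cons (by
            have h := u.2
            rw [Finset.mem_sdiff, Finset.mem_inter, SimpleGraph.mem_neighborFinset] at h
            exact h.1.1) w))

lemma length_of_mem_PF (G : SimpleGraph V) (x : V) (T : ℕ → Finset V) :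
    ∀ (ℓ : ℕ) (F : Finset V) (z : V) (w : G.Walk z x),
      w ∈ PF G x T ℓ F z → w.length = ℓ + 1 := by
  intro ℓ
  induction ℓ with
  | zero =>
    intro F z w hw
    rw [PF] at hw
    split at hw
    · simp only [Finset.mem_singleton] at hw
      subst hw; simp
    · simp at hw
  | succ ℓ ih =>
    intro F z w hw
    rw [PF] at hw
    simp only [Finset.mem_biUnion, Finset.mem_image, Finset.mem_attach, true_and] at hw
    obtain ⟨u, w', hw', rfl⟩ := hw
    simp [ih _ _ _ hw']

lemma isPath_of_mem_PF (G : SimpleGraph V) (x : V) (T : ℕ → Finset V) :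
    ∀ (ℓ : ℕ) (F : Finset V) (z : V), x ∈ F → z ∉ F →
      ∀ w ∈ PF G x T ℓ F z, w.IsPath ∧ ∀ v ∈ w.support, v ∉ F ∨ v = x := by
  intro ℓ
  induction ℓ with
  | zero =>
    intro F z hx hz w hw
    rw [PF] at hw
    split at hw
    case isTrue h =>
      simp only [Finset.mem_singleton] at hw
      subst hw
      refine ⟨?_, ?_⟩
      · have hzx : z ≠ x := fun hzx => hz (hzx ▸ hx)
        simp [Walk.isPath_def, hzx]
      · intro v hv
        simp only [Walk.support_cons, Walk.support_nil, List.mem_cons,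
          List.mem_singleton, List.not_mem_nil, or_false] at hv
        rcases hv with rfl | rfl
        · exact Or.inl hz
        · exact Or.inr rfl
    · simp at hw
  | succ ℓ ih =>
    intro F z hx hz w hw
    rw [PF] at hw
    simp only [Finset.mem_biUnion, Finset.mem_image, Finset.mem_attach, true_and] at hw
    obtain ⟨u, w', hw', rfl⟩ := hw
    have hu := u.2
    rw [Finset.mem_sdiff] at hu
    have hune : ↑u ∉ insert z F := hu.2
    obtain ⟨hp, hs⟩ := ih (insert z F) u (Finset.mem_insert_of_mem hx) hune w' hw'
    have hzx : z ≠ x := fun h => hz (h ▸ hx)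
    have hznot : z ∉ w'.support := by
      intro hzs
      rcases hs z hzs with h | h
      · exact h (Finset.mem_insert_self _ _)
      · exact hzx h
    refine ⟨hp.cons hznot, ?_⟩
    intro v hv
    rw [Walk.support_cons, List.mem_cons] at hv
    rcases hv with rfl | hv
    · exact Or.inl hz
    · rcases hs v hv with h | h
      · exact Or.inl fun hvF => h (Finset.mem_insert_of_mem hvF)
      · exact Or.inr h

lemma card_PF (G : SimpleGraph V) (x : V) (T : ℕ → Finset V) (m : ℕ)
    (hT0 : T 0 ⊆ G.neighborFinset x)
    (hT : ∀ j v, v ∈ T (j+1) → m ≤ (G.neighborFinset v ∩ T j).card) :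
    ∀ (ℓ : ℕ) (F : Finset V) (z : V),
      m ≤ (G.neighborFinset z ∩ T ℓ).card →
      (m - (F.card + (ℓ+1)))^(ℓ+1) ≤ (PF G x T (ℓ+1) F z).card := by
  have hdisj : ∀ (ℓ : ℕ) (F : Finset V) (z : V),
      ∀ u ∈ ((G.neighborFinset z ∩ T ℓ) \ insert z F).attach,
      ∀ v ∈ ((G.neighborFinset z ∩ T ℓ) \ insert z F).attach, u ≠ v →
        Disjoint ((PF G x T ℓ (insert z F) u.1).image
            (fun w => Walk.cons (by
              have h := u.2
              rw [Finset.mem_sdiff, Finset.mem_inter, SimpleGraph.mem_neighborFinset] at h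
              exact h.1.1) w))
          ((PF G x T ℓ (insert z F) v.1).image
            (fun w => Walk.cons (by
              have h := v.2
              rw [Finset.mem_sdiff, Finset.mem_inter, SimpleGraph.mem_neighborFinset] at h
              exact h.1.1) w)) := by
    intro ℓ F z u _ v _ huv
    refine Finset.disjoint_left.mpr ?_
    intro w hw1 hw2
    simp only [Finset.mem_image] at hw1 hw2
    obtain ⟨w1, _, rfl⟩ := hw1
    obtain ⟨w2, _, h2⟩ := hw2
    apply huv
    apply Subtype.ext
    have := congrArg (fun w : G.Walk z x => w.getVert 1) h2
    simpa using this.symm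
  have hinj : ∀ (z u : V) (h : G.Adj z u),
      Function.Injective (fun w : G.Walk u x => Walk.cons h w) := by
    intro z u h a b hab
    simpa using hab
  intro ℓ
  induction ℓ with
  | zero =>
    intro F z hz
    rw [PF]
    rw [Finset.card_biUnion (hdisj 0 F z)]
    have hone : ∀ u : {y // y ∈ (G.neighborFinset z ∩ T 0) \ insert z F},
        1 ≤ ((PF G x T 0 (insert z F) u.1).image
          (fun w => Walk.cons (by
            have h := u.2
            rw [Finset.mem_sdiff, Finset.mem_inter, SimpleGraph.mem_neighborFinset] at h
            exact h.1.1) w)).card := by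
      intro u
      have hu := u.2
      rw [Finset.mem_sdiff, Finset.mem_inter] at hu
      have hadj : G.Adj ↑u x := (SimpleGraph.mem_neighborFinset _ _ _).mp (hT0 hu.1.2) |>.symm
      have : PF G x T 0 (insert z F) u.1 = {Walk.cons hadj Walk.nil} := by
        rw [PF]; rw [dif_pos hadj]
      rw [this]
      simp
    calc (m - (F.card + (0+1)))^(0+1)
        = m - (F.card + 1) := by ring
      _ ≤ (G.neighborFinset z ∩ T 0).card - (insert z F).card := by
          exact tsub_le_tsub hz (Finset.card_insert_le _ _)
      _ ≤ ((G.neighborFinset z ∩ T 0) \ insert z F).card := Finset.le_card_sdiff _ _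
      _ = ((G.neighborFinset z ∩ T 0) \ insert z F).attach.card := by
          rw [Finset.card_attach]
      _ = ((G.neighborFinset z ∩ T 0) \ insert z F).attach.card • 1 := by simp
      _ ≤ _ := Finset.card_nsmul_le_sum _ _ _ (fun u _ => hone u)
  | succ ℓ ih =>
    intro F z hz
    rw [PF]
    rw [Finset.card_biUnion (hdisj (ℓ+1) F z)]
    have hbound : ∀ u : {y // y ∈ (G.neighborFinset z ∩ T (ℓ+1)) \ insert z F},
        (m - (F.card + (ℓ+2)))^(ℓ+1) ≤ ((PF G x T (ℓ+1) (insert z F) u.1).image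
          (fun w => Walk.cons (by
            have h := u.2
            rw [Finset.mem_sdiff, Finset.mem_inter, SimpleGraph.mem_neighborFinset] at h
            exact h.1.1) w)).card := by
      intro u
      have hu := u.2
      rw [Finset.mem_sdiff, Finset.mem_inter] at hu
      have hadj : G.Adj z ↑u := (SimpleGraph.mem_neighborFinset _ _ _).mp hu.1.1
      rw [Finset.card_image_of_injective _ (hinj z u hadj)]
      have h1 := ih (insert z F) u.1 (hT ℓ u.1 hu.1.2)
      refine le_trans ?_ h1
      apply Nat.pow_le_pow_left
      apply tsub_le_tsub_left
      have := Finset.card_insert_le z F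
      omega
    calc (m - (F.card + (ℓ+1+1)))^(ℓ+1+1)
        = (m - (F.card + (ℓ+2))) * (m - (F.card + (ℓ+2)))^(ℓ+1) := by ring
      _ ≤ ((G.neighborFinset z ∩ T (ℓ+1)) \ insert z F).attach.card *
            (m - (F.card + (ℓ+2)))^(ℓ+1) := by
          apply Nat.mul_le_mul_right
          rw [Finset.card_attach]
          refine le_trans ?_ (Finset.le_card_sdiff _ _)
          refine le_trans ?_ (tsub_le_tsub hz (Finset.card_insert_le _ _))
          omega
      _ = ((G.neighborFinset z ∩ T (ℓ+1)) \ insert z F).attach.card •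
            (m - (F.card + (ℓ+2)))^(ℓ+1) := by simp
      _ ≤ _ := Finset.card_nsmul_le_sum _ _ _ (fun u _ => hbound u)

end RobustAux

set_option maxHeartbeats 1000000 in
/-- Robust `(ν, τ)`-expanders with minimum degree at least `(τ + ν) n` are
`(δ, L)`-robustly-connected with `L = ⌈1/ν⌉` and `δ = (ν/4)^L · 4^(−L²)`. -/
theorem robust_expander_robustly_connected (ν τ : ℝ) (hν : 0 < ν) (hτ : 0 < τ)
    (hντ : ν ≤ τ) :
    ∃ n₀ : ℕ, ∀ n ≥ n₀, ∀ G : SimpleGraph (Fin n),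
      RobustExpander n G ν τ →
      (∀ v : Fin n, (τ + ν) * n ≤ ((G.neighborSet v).ncard : ℝ)) →
      RobustlyConnected n G ((ν / 4) ^ (⌈1 / ν⌉₊) / 4 ^ ((⌈1 / ν⌉₊) ^ 2)) ⌈1 / ν⌉₊ := by
  classical
  set L : ℕ := ⌈1 / ν⌉₊ with hLdef
  refine ⟨⌈2 * ((L : ℝ) + 1) / ν⌉₊ + 1, ?_⟩
  intro n hn G hexp hdeg x y hxy
  -- degree in terms of finsets
  have hdegF : ∀ v : Fin n, (τ + ν) * n ≤ ((G.neighborFinset v).card : ℝ) := by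
    intro v
    have := hdeg v
    rwa [Set.ncard_eq_toFinset_card', ← SimpleGraph.neighborFinset_def] at this
  have hn1 : 1 ≤ n := le_trans (Nat.le_add_left 1 _) hn
  have hnR : (1 : ℝ) ≤ n := by exact_mod_cast hn1
  have hn0 : (0 : ℝ) < n := lt_of_lt_of_le one_pos hnR
  have hνn : 2 * ((L : ℝ) + 1) ≤ ν * n := by
    have h1 : (⌈2 * ((L : ℝ) + 1) / ν⌉₊ : ℝ) ≤ n := by
      exact_mod_cast le_trans (Nat.le_succ _) hn
    have h2 : 2 * ((L : ℝ) + 1) / ν ≤ n := le_trans (Nat.le_ceil _) h1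
    calc 2 * ((L : ℝ) + 1) = (2 * ((L : ℝ) + 1) / ν) * ν := by field_simp
      _ ≤ n * ν := mul_le_mul_of_nonneg_right h2 hν.le
      _ = ν * n := mul_comm _ _
  have hL1 : 1 ≤ L := by
    rw [hLdef]
    exact Nat.one_le_ceil_iff.mpr (by positivity)
  -- rule out τ + ν ≥ 1
  by_cases hcase : 1 ≤ τ + ν
  · exfalso
    have hsub : G.neighborFinset x ⊆ Finset.univ.erase x := by
      intro v hv
      rw [Finset.mem_erase]
      rw [SimpleGraph.mem_neighborFinset] at hv
      exact ⟨(G.ne_of_adj hv).symm, Finset.mem_univ _⟩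
    have hcard : (G.neighborFinset x).card ≤ n - 1 := by
      have := Finset.card_le_card hsub
      rwa [Finset.card_erase_of_mem (Finset.mem_univ _), Finset.card_univ,
        Fintype.card_fin] at this
    have hcardR : ((G.neighborFinset x).card : ℝ) ≤ (n : ℝ) - 1 := by
      have : ((n - 1 : ℕ) : ℝ) = (n : ℝ) - 1 := by
        rw [Nat.cast_sub hn1]; simp
      rw [← this]
      exact_mod_cast hcard
    have := hdegF x
    nlinarith
  push_neg at hcase
  have hν1 : ν < 1 / 2 := by linarith
  -- the expanding chain of finsets
  set m : ℕ := ⌈ν * n⌉₊ with hmdef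
  set S : ℕ → Finset (Fin n) := fun j => Nat.rec (G.neighborFinset x)
    (fun _ Sj => Finset.univ.filter
      (fun v => ν * n ≤ ((G.neighborFinset v ∩ Sj).card : ℝ))) j with hSdef
  have hS0 : S 0 = G.neighborFinset x := rfl
  have hSsucc : ∀ j, S (j + 1) = Finset.univ.filter
      (fun v => ν * n ≤ ((G.neighborFinset v ∩ S j).card : ℝ)) := fun j => rfl
  -- robust nbhd vs filter
  have hRN : ∀ j, RobustNbhd n G ν ↑(S j) = ↑(S (j + 1)) := by
    intro j
    rw [hSsucc j]
    ext v
    have hset : G.neighborSet v ∩ ↑(S j) = ↑(G.neighborFinset v ∩ S j) := by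
      rw [Finset.coe_inter, SimpleGraph.neighborFinset_def, Set.coe_toFinset]
    simp only [RobustNbhd, Set.mem_setOf_eq, Finset.coe_filter, Finset.mem_univ, true_and,
      hset, Set.ncard_coe_finset]
  -- growth
  have hgrow : ∀ j, τ * n ≤ ((S j).card : ℝ) → ((S j).card : ℝ) ≤ (1 - τ) * n →
      ((S j).card : ℝ) + ν * n ≤ ((S (j + 1)).card : ℝ) := by
    intro j h1 h2
    have := hexp ↑(S j) (by rwa [Set.ncard_coe_finset]) (by rwa [Set.ncard_coe_finset])
    rwa [Set.ncard_coe_finset, hRN j, Set.ncard_coe_finset] at this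
  have hS0card : (τ + ν) * n ≤ ((S 0).card : ℝ) := by rw [hS0]; exact hdegF x
  have hgrowth : ∀ j, (∀ k < j, ((S k).card : ℝ) ≤ (1 - τ) * n) →
      (τ + ν) * n + j * (ν * n) ≤ ((S j).card : ℝ) := by
    intro j
    induction j with
    | zero => intro _; simpa using hS0card
    | succ j ih =>
      intro h
      have hj := ih (fun k hk => h k (Nat.lt_succ_of_lt hk))
      have h1 : τ * n ≤ ((S j).card : ℝ) := by
        refine le_trans ?_ hj
        have : (0:ℝ) ≤ (j : ℝ) * (ν * n) := by positivity
        nlinarith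
      have h2 := h j (Nat.lt_succ_self j)
      have h3 := hgrow j h1 h2
      push_cast
      push_cast at hj
      nlinarith
  have hLν : 1 ≤ (L : ℝ) * ν := by
    have h1 : (1 / ν : ℝ) ≤ L := Nat.le_ceil _
    calc (1:ℝ) = (1 / ν) * ν := by field_simp
      _ ≤ (L : ℝ) * ν := mul_le_mul_of_nonneg_right h1 hν.le
  have hcap : ∃ i, i < L ∧ (1 - τ) * n < ((S i).card : ℝ) := by
    by_contra hcon
    push_neg at hcon
    have h1 := hgrowth L hcon
    have h2 : ((S L).card : ℝ) ≤ n := by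
      have := Finset.card_le_univ (S L)
      simp only [Finset.card_univ, Fintype.card_fin] at this
      exact_mod_cast this
    have h3 : (n : ℝ) ≤ (L : ℝ) * (ν * n) := by
      have := mul_le_mul_of_nonneg_right hLν hn0.le
      nlinarith
    nlinarith [mul_pos (lt_of_lt_of_le hτ (by linarith : τ ≤ τ + ν)) hn0]
  obtain ⟨i, hiL, hbig⟩ := hcap
  set ℓ : ℕ := i + 1 with hℓdef
  have hℓL : ℓ ≤ L := Nat.succ_le_of_lt hiL
  -- hypotheses of card_PF
  have hT0 : S 0 ⊆ G.neighborFinset x := by rw [hS0]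
  have hT : ∀ j v, v ∈ S (j + 1) → m ≤ (G.neighborFinset v ∩ S j).card := by
    intro j v hv
    rw [hSsucc j, Finset.mem_filter] at hv
    exact Nat.ceil_le.mpr hv.2
  have hz : m ≤ (G.neighborFinset y ∩ S i).card := by
    apply Nat.ceil_le.mpr
    have hsplit := Finset.card_inter_add_card_sdiff (G.neighborFinset y) (S i)
    have hsd : (G.neighborFinset y \ S i).card ≤ n - (S i).card := by
      have hsub : G.neighborFinset y \ S i ⊆ (S i)ᶜ := by
        intro v hv
        rw [Finset.mem_sdiff] at hv
        rw [Finset.mem_compl]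
        exact hv.2
      have := Finset.card_le_card hsub
      rwa [Finset.card_compl, Fintype.card_fin] at this
    have hSin : (S i).card ≤ n := by
      have := Finset.card_le_univ (S i)
      simpa only [Finset.card_univ, Fintype.card_fin] using this
    have hR1 : ((G.neighborFinset y \ S i).card : ℝ) ≤ (n : ℝ) - ((S i).card : ℝ) := by
      have h1 : ((n - (S i).card : ℕ) : ℝ) = (n : ℝ) - ((S i).card : ℝ) := by
        rw [Nat.cast_sub hSin]
      rw [← h1]; exact_mod_cast hsd
    have hR2 : ((G.neighborFinset y ∩ S i).card : ℝ)
        = ((G.neighborFinset y).card : ℝ) - ((G.neighborFinset y \ S i).card : ℝ) := by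
      have : ((G.neighborFinset y ∩ S i).card : ℝ) + ((G.neighborFinset y \ S i).card : ℝ)
          = ((G.neighborFinset y).card : ℝ) := by exact_mod_cast congrArg Nat.cast hsplit
      linarith
    have := hdegF y
    rw [hR2]
    nlinarith
  have hcard := RobustAux.card_PF G x S m hT0 hT i ({x} : Finset (Fin n)) y hz
  rw [Finset.card_singleton] at hcard
  -- properties of the walks
  have hmem := RobustAux.isPath_of_mem_PF G x S ℓ ({x} : Finset (Fin n)) y
    (Finset.mem_singleton_self x) (by simp [Ne.symm hxy])
  have hlen := RobustAux.length_of_mem_PF G x S ℓ ({x} : Finset (Fin n)) y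
  -- image under reverse
  set Q : Finset (G.Walk x y) :=
    (RobustAux.PF G x S ℓ ({x} : Finset (Fin n)) y).image Walk.reverse with hQdef
  have hQcard : Q.card = (RobustAux.PF G x S ℓ ({x} : Finset (Fin n)) y).card :=
    Finset.card_image_of_injective _ Walk.reverse_injective
  have hQsub : ↑Q ⊆ {w : G.Walk x y | w.IsPath ∧ w.length = ℓ + 1} := by
    intro w hw
    rw [hQdef, Finset.coe_image] at hw
    obtain ⟨w', hw', rfl⟩ := hw
    rw [Finset.mem_coe] at hw'
    refine ⟨(hmem w' hw').1.reverse, ?_⟩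
    rw [Walk.length_reverse]
    exact hlen w' hw'
  have hfin : ({w : G.Walk x y | w.IsPath ∧ w.length = ℓ + 1} : Set (G.Walk x y)).Finite := by
    apply Set.Finite.subset (Set.finite_range (fun p : G.Path x y => p.1))
    intro w hw
    exact ⟨⟨w, hw.1⟩, rfl⟩
  have hncard : (Q.card : ℕ) ≤
      ({w : G.Walk x y | w.IsPath ∧ w.length = ℓ + 1} : Set (G.Walk x y)).ncard := by
    rw [← Set.ncard_coe_finset Q]
    exact Set.ncard_le_ncard hQsub hfin
  refine ⟨ℓ, Nat.le_add_left 1 i, hℓL, ?_⟩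
  -- numeric bound
  have hmR : ν * n ≤ (m : ℝ) := Nat.le_ceil _
  have hℓLR : (ℓ : ℝ) ≤ (L : ℝ) := by exact_mod_cast hℓL
  have hL0 : (0 : ℝ) ≤ (L : ℝ) := Nat.cast_nonneg L
  have hiLR : (i : ℝ) + 1 ≤ (L : ℝ) := by
    have h : i + 1 ≤ L := hℓL
    exact_mod_cast h
  have hsub_le : 1 + ℓ ≤ m := by
    have : ((1 + ℓ : ℕ) : ℝ) ≤ (m : ℝ) := by
      push_cast
      linarith
    exact_mod_cast this
  have hhalf : (ν / 2) * n ≤ (m : ℝ) - (1 + ℓ : ℕ) := by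
    push_cast
    linarith
  have hpow1 : ((ν / 2) * n) ^ ℓ ≤ ((m : ℝ) - ((1 + ℓ : ℕ) : ℝ)) ^ ℓ :=
    pow_le_pow_left₀ (by positivity) hhalf ℓ
  have hδ : (ν / 4) ^ L / 4 ^ (L ^ 2) ≤ (ν / 2) ^ ℓ := by
    have h1 : (ν / 4 : ℝ) ^ L / 4 ^ (L ^ 2) ≤ (ν / 4) ^ L := by
      apply div_le_self (by positivity)
      exact one_le_pow₀ (by norm_num)
    have h2 : (ν / 4 : ℝ) ^ L ≤ (ν / 4) ^ ℓ :=
      pow_le_pow_of_le_one (by positivity) (by linarith) hℓL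
    have h3 : (ν / 4 : ℝ) ^ ℓ ≤ (ν / 2) ^ ℓ :=
      pow_le_pow_left₀ (by positivity) (by linarith) ℓ
    linarith
  have hcastm : (((m - (1 + ℓ)) ^ ℓ : ℕ) : ℝ) = ((m : ℝ) - ((1 + ℓ : ℕ) : ℝ)) ^ ℓ := by
    push_cast [Nat.cast_sub hsub_le]
    ring
  have hfinal : ((ν / 4) ^ L / 4 ^ (L ^ 2)) * (n : ℝ) ^ ℓ ≤
      (({w : G.Walk x y | w.IsPath ∧ w.length = ℓ + 1} : Set (G.Walk x y)).ncard : ℝ) := by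
    have c0 : ((ν / 4) ^ L / 4 ^ (L ^ 2)) * (n : ℝ) ^ ℓ ≤ (ν / 2) ^ ℓ * (n : ℝ) ^ ℓ :=
      mul_le_mul_of_nonneg_right hδ (by positivity)
    have c1 : (ν / 2) ^ ℓ * (n : ℝ) ^ ℓ = ((ν / 2) * n) ^ ℓ := (mul_pow _ _ _).symm
    have c2 : (((m - (1 + ℓ)) ^ ℓ : ℕ) : ℝ) ≤
        ((RobustAux.PF G x S ℓ ({x} : Finset (Fin n)) y).card : ℝ) := by
      exact_mod_cast (hcard :
        (m - (1 + ℓ)) ^ ℓ ≤ (RobustAux.PF G x S ℓ ({x} : Finset (Fin n)) y).card)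
    have c3 : ((RobustAux.PF G x S ℓ ({x} : Finset (Fin n)) y).card : ℝ) ≤
        (({w : G.Walk x y | w.IsPath ∧ w.length = ℓ + 1} :
          Set (G.Walk x y)).ncard : ℝ) := by
      rw [← hQcard]
      exact_mod_cast hncard
    calc ((ν / 4) ^ L / 4 ^ (L ^ 2)) * (n : ℝ) ^ ℓ
        ≤ ((ν / 2) * n) ^ ℓ := by rw [← c1]; exact c0
      _ ≤ ((m : ℝ) - ((1 + ℓ : ℕ) : ℝ)) ^ ℓ := hpow1
      _ = (((m - (1 + ℓ)) ^ ℓ : ℕ) : ℝ) := hcastm.symm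
      _ ≤ _ := le_trans c2 c3
  exact hfinal
end
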